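/- Each sign occurs infinitely often: the set of pairs of positive integers (a, d) with d² = 2·a² + 1 is infinite, and the set of pairs of positive integers (a, d) with d² + 1 = 2·a² is infinite. -/
import Mathlib

private def pellStep (p : ℕ × ℕ) : ℕ × ℕ := (3 * p.1 + 2 * p.2, 4 * p.1 + 3 * p.2)

private lemma infinite_of_pellStep (S : Set (ℕ × ℕ)) (p0 : ℕ × ℕ) (h0 : p0 ∈ S)
    (hpos : ∀ p ∈ S, 0 < p.1) (hstep : ∀ p ∈ S, pellStep p ∈ S) : S.Infinite := by
  set F : ℕ → ℕ × ℕ := fun n => pellStep^[n] p0 with hF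
  have hmem : ∀ n, F n ∈ S := by
    intro n
    induction n with
    | zero => exact h0
    | succ n ih => simpa [hF, Function.iterate_succ_apply'] using hstep _ ih
  have hmono : StrictMono fun n => (F n).1 := by
    apply strictMono_nat_of_lt_succ
    intro n
    have h1 := hpos _ (hmem n)
    have : F (n + 1) = pellStep (F n) := by
      simp [hF, Function.iterate_succ_apply']
    rw [this]
    simp only [pellStep]
    omega
  apply Set.infinite_of_injective_forall_mem (f := F)
  · intro m n h
    exact hmono.injective (by rw [h])
  · exact hmem

theorem each_sign_infinite :
    {p : ℕ × ℕ | 0 < p.1 ∧ 0 < p.2 ∧ p.2 ^ 2 = 2 * p.1 ^ 2 + 1}.Infinite ∧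
    {p : ℕ × ℕ | 0 < p.1 ∧ 0 < p.2 ∧ p.2 ^ 2 + 1 = 2 * p.1 ^ 2}.Infinite := by
  constructor
  · apply infinite_of_pellStep _ (2, 3)
    · norm_num
    · exact fun p hp => hp.1
    · rintro ⟨a, d⟩ ⟨ha, hd, heq⟩
      refine ⟨by simp [pellStep]; omega, by simp [pellStep]; omega, ?_⟩
      simp only [pellStep]
      ring_nf
      ring_nf at heq
      nlinarith [heq]
  · apply infinite_of_pellStep _ (1, 1)
    · norm_num
    · exact fun p hp => hp.1
    · rintro ⟨a, d⟩ ⟨ha, hd, heq⟩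
      refine ⟨by simp [pellStep]; omega, by simp [pellStep]; omega, ?_⟩
      simp only [pellStep]
      ring_nf
      ring_nf at heq
      nlinarith [heq]
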